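/- arXiv:1607.02032 — 2 statements merged into one kernel-verified Lean document; each statement's English description precedes it below -/
import Mathlib

section
/- Let F be a field and let A be either the 3×3 generalized Cartan matrix with rows (2,−2,−2), (−2,2,−2), (−2,−2,2), or the 3×3 generalized Cartan matrix with rows (2,−2,0), (−2,2,−2), (0,−2,2). Then in both cases K_2(A,F) is isomorphic to K_2(2,F) × (K_2(2,F)/⟨{u²,v}⟩) × (K_2(2,F)/⟨{u²,v}⟩). -/
/-!
Common definitions: presentations of the abelian groups `K₂(F)`, `K₂(2,F)` and `K₂(A,F)`
(Rehmann–Morita).  "The abelian group generated by symbols subject to relations" is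
formalized as the abelianization of the corresponding presented group.
-/

variable (F : Type) [Field F]

/-- Relators for `K₂(F)`: the Steinberg symbol relations (A1)-(A3).
(A3) `{u, 1-u} = 1` (for `u ≠ 1`) is encoded as: for units `u, w` with `(w : F) = 1 - u`
(which forces `u ≠ 1`), `{u, w}` is a relator. -/
def K2Rels : Set (FreeGroup (Fˣ × Fˣ)) :=
  {r | (∃ t u v : Fˣ, r = FreeGroup.of (t * u, v) * (FreeGroup.of (t, v) * FreeGroup.of (u, v))⁻¹) ∨
       (∃ t u v : Fˣ, r = FreeGroup.of (t, u * v) * (FreeGroup.of (t, u) * FreeGroup.of (t, v))⁻¹) ∨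
       (∃ u w : Fˣ, (w : F) = 1 - (u : F) ∧ r = FreeGroup.of (u, w))}

/-- `K₂(F)`: the abelian group generated by the symbols `{u,v}`, `u v ∈ Fˣ`,
subject to the Steinberg symbol relations (A1)-(A3). -/
def K2 : Type := Abelianization (PresentedGroup (K2Rels F))

noncomputable instance : CommGroup (K2 F) := inferInstanceAs (CommGroup (Abelianization _))

/-- The Steinberg symbol `{u,v}` in `K₂(F)`. -/
def K2.sym (u v : Fˣ) : K2 F := Abelianization.of (PresentedGroup.of (u, v))

/-- The subgroup `m·K₂(F)` of `m`-th powers of elements of `K₂(F)`. -/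
noncomputable def K2.powSubgroup (m : ℕ) : Subgroup (K2 F) := Subgroup.closure {x | ∃ y : K2 F, x = y ^ m}

/-- Relators for `K₂(2,F)`: the Steinberg cocycle relations (B1)-(B4). -/
def K2SLRels : Set (FreeGroup (Fˣ × Fˣ)) :=
  {r | (∃ t u v : Fˣ, r = FreeGroup.of (t, u) * FreeGroup.of (t * u, v) *
          (FreeGroup.of (t, u * v) * FreeGroup.of (u, v))⁻¹) ∨
       (r = FreeGroup.of ((1 : Fˣ), (1 : Fˣ))) ∨
       (∃ u v : Fˣ, r = FreeGroup.of (u, v) * (FreeGroup.of (u⁻¹, v⁻¹))⁻¹) ∨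
       (∃ u v w : Fˣ, (w : F) = 1 - (u : F) ∧
          r = FreeGroup.of (u, v) * (FreeGroup.of (u, w * v))⁻¹)}

/-- `K₂(2,F)`: the abelian group generated by the symbols `{u,v}`, `u v ∈ Fˣ`,
subject to the Steinberg cocycle relations (B1)-(B4). -/
def K2SL : Type := Abelianization (PresentedGroup (K2SLRels F))

noncomputable instance : CommGroup (K2SL F) := inferInstanceAs (CommGroup (Abelianization _))

/-- The Steinberg cocycle `{u,v}` in `K₂(2,F)`. -/
def K2SL.sym (u v : Fˣ) : K2SL F := Abelianization.of (PresentedGroup.of (u, v))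

/-- The subgroup `m⟨{u²,v}⟩` of `K₂(2,F)` generated by the elements `{u²,v}^m`, `u v ∈ Fˣ`. -/
noncomputable def K2SL.sqSubgroup (m : ℤ) : Subgroup (K2SL F) :=
  Subgroup.closure {x | ∃ u v : Fˣ, x = (K2SL.sym F (u ^ 2) v) ^ m}

/-- A generalized Cartan matrix: `a_{ii} = 2`, off-diagonal entries `≤ 0`,
and `a_{ij} = 0 ↔ a_{ji} = 0`. -/
def IsGCM {n : ℕ} (A : Matrix (Fin n) (Fin n) ℤ) : Prop :=
  (∀ i, A i i = 2) ∧ (∀ i j, i ≠ j → A i j ≤ 0) ∧ (∀ i j, A i j = 0 ↔ A j i = 0)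

/-- Relators for `K₂(A,F)`: the Rehmann–Morita relations (L1)-(L7). -/
def K2ARels {n : ℕ} (A : Matrix (Fin n) (Fin n) ℤ) : Set (FreeGroup (Fin n × Fˣ × Fˣ)) :=
  {r | (∃ (i : Fin n) (t u v : Fˣ),
          r = FreeGroup.of (i, t, u) * FreeGroup.of (i, t * u, v) *
              (FreeGroup.of (i, t, u * v) * FreeGroup.of (i, u, v))⁻¹) ∨
       (∃ i : Fin n, r = FreeGroup.of (i, 1, 1)) ∨
       (∃ (i : Fin n) (u v : Fˣ),
          r = FreeGroup.of (i, u, v) * (FreeGroup.of (i, u⁻¹, v⁻¹))⁻¹) ∨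
       (∃ (i : Fin n) (u v w : Fˣ), (w : F) = 1 - (u : F) ∧
          r = FreeGroup.of (i, u, v) * (FreeGroup.of (i, u, w * v))⁻¹) ∨
       (∃ (i j : Fin n) (u v : Fˣ), i ≠ j ∧
          r = FreeGroup.of (i, u, v ^ (A j i)) * (FreeGroup.of (j, u ^ (A i j), v))⁻¹) ∨
       (∃ (i j : Fin n) (t u v : Fˣ), i ≠ j ∧
          r = FreeGroup.of (i, t * u, v ^ (A j i)) *
              (FreeGroup.of (i, t, v ^ (A j i)) * FreeGroup.of (i, u, v ^ (A j i)))⁻¹) ∨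
       (∃ (i j : Fin n) (t u v : Fˣ), i ≠ j ∧
          r = FreeGroup.of (i, t ^ (A j i), u * v) *
              (FreeGroup.of (i, t ^ (A j i), u) * FreeGroup.of (i, t ^ (A j i), v))⁻¹)}

/-- `K₂(A,F)`: the abelian group generated by the symbols `c_i(u,v)` subject to (L1)-(L7). -/
def K2A {n : ℕ} (A : Matrix (Fin n) (Fin n) ℤ) : Type :=
  Abelianization (PresentedGroup (K2ARels F A))

noncomputable instance {n : ℕ} (A : Matrix (Fin n) (Fin n) ℤ) : CommGroup (K2A F A) :=
  inferInstanceAs (CommGroup (Abelianization _))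

/-- The generator `c_i(u,v)` of `K₂(A,F)`. -/
def K2A.c {n : ℕ} (A : Matrix (Fin n) (Fin n) ℤ) (i : Fin n) (u v : Fˣ) : K2A F A :=
  Abelianization.of (PresentedGroup.of (i, u, v))

open scoped Classical in
/-- `LGroup F p` is `K₂(F)` when `p` holds and `K₂(2,F)` otherwise.  Taking
`p = "the i-th column of A has an odd entry"` gives the factor `L_i`. -/
noncomputable def LGroup (p : Prop) : Type :=
  Abelianization (PresentedGroup (if p then K2Rels F else K2SLRels F))

noncomputable instance (p : Prop) : CommGroup (LGroup F p) :=
  inferInstanceAs (CommGroup (Abelianization _))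

/-- The symbol `{u,v}` (Steinberg symbol resp. cocycle) in `LGroup F p`. -/
noncomputable def LGroup.sym (p : Prop) (u v : Fˣ) : LGroup F p :=
  Abelianization.of (PresentedGroup.of (u, v))

/-- Relators `x_i^{a_{ji}} = x_j^{a_{ij}}` (`i < j`) for the auxiliary abelian group `G`. -/
def GRels {n : ℕ} (A : Matrix (Fin n) (Fin n) ℤ) : Set (FreeGroup (Fin n)) :=
  {r | ∃ i j : Fin n, i < j ∧ r = FreeGroup.of i ^ (A j i) * (FreeGroup.of j ^ (A i j))⁻¹}

/-- The abelian group `G = ⟨x_1,…,x_n ∣ x_i^{a_{ji}} = x_j^{a_{ij}}, [x_i,x_j] = 1⟩`. -/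
def GGroup {n : ℕ} (A : Matrix (Fin n) (Fin n) ℤ) : Type :=
  Abelianization (PresentedGroup (GRels A))

noncomputable instance {n : ℕ} (A : Matrix (Fin n) (Fin n) ℤ) : CommGroup (GGroup A) :=
  inferInstanceAs (CommGroup (Abelianization _))

/-!
The generators `c_i` of `K₂(A,F)` are Steinberg cocycles, and any Steinberg cocycle satisfies
`c(u², v) = c(u, v²)` with `c(u², ·)` and `c(·, v²)` multiplicative. When the off-diagonal
entries of `A` are even and symmetric, this makes (L5)–(L7) automatic for every family
`c_i = f_i ∘ {·,·}` of homomorphisms out of `K₂(2,F)` that agree on `⟨{u²,v}⟩`. Sending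
`c_0, c_1, c_2` to `({u,v}, 1, 1)`, `({u,v}, [u,v], 1)`, `({u,v}, [u,v], [u,v])` thus defines
`K₂(A,F) → K₂(2,F) × Q × Q`, `Q = K₂(2,F)/⟨{u²,v}⟩`. Conversely, where `a_ij = a_ji = -2`,
(L5) reads `c_i(u², v)⁻¹ = c_j(u², v)⁻¹`, so `c_1 / c_0` and `c_2 / c_1` factor through `Q`;
together with `c_0` they give the inverse map.
-/
section SteinbergCocycle

variable {F} {M N : Type*} [CommGroup M] [CommGroup N]

structure IsSteinbergCocycle (c : Fˣ → Fˣ → M) : Prop where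
  mul_mul : ∀ t u v : Fˣ, c t u * c (t * u) v = c t (u * v) * c u v
  one_one : c 1 1 = 1
  eq_inv_inv : ∀ u v : Fˣ, c u v = c u⁻¹ v⁻¹
  eq_one_sub_mul : ∀ u v w : Fˣ, (w : F) = 1 - u → c u v = c u (w * v)

namespace IsSteinbergCocycle

variable {c : Fˣ → Fˣ → M} (hc : IsSteinbergCocycle c)
include hc

lemma one_left (v : Fˣ) : c 1 v = 1 := by
  simpa [hc.one_one] using hc.mul_mul 1 1 v

lemma one_right (u : Fˣ) : c u 1 = 1 := by
  simpa [hc.one_one] using hc.mul_mul u 1 1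

lemma inv_left (u v : Fˣ) : c u⁻¹ v = c u v⁻¹ := by
  rw [hc.eq_inv_inv u⁻¹ v, inv_inv]

lemma neg_mul_right (x y : Fˣ) : c x (-x * y) = c x y := by
  rcases eq_or_ne x 1 with rfl | hx
  · rw [hc.one_left, hc.one_left]
  have hx₁ : (x : F) ≠ 1 := fun h => hx (Units.val_eq_one.mp h)
  let w : Fˣ := Units.mk0 (1 - x) (sub_ne_zero.mpr hx₁.symm)
  let w' : Fˣ := Units.mk0 (1 - (x : F)⁻¹) (sub_ne_zero.mpr (by simpa [eq_comm] using hx₁))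
  have hw : -x = w * w'⁻¹ := by
    ext
    have : (1 : F) - (x : F)⁻¹ ≠ 0 := w'.ne_zero
    simp only [Units.val_neg, Units.val_mul, Units.val_inv_eq_inv_val, Units.val_mk0, w, w']
    field_simp
    ring
  calc c x (-x * y) = c x (w * (w'⁻¹ * y)) := by rw [hw, mul_assoc]
    _ = c x (w'⁻¹ * y) := (hc.eq_one_sub_mul _ _ _ rfl).symm
    _ = c x⁻¹ (w' * y⁻¹) := by rw [hc.eq_inv_inv, mul_inv, inv_inv]
    _ = c x⁻¹ y⁻¹ := (hc.eq_one_sub_mul _ _ _ (by simp [w'])).symm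
    _ = c x y := (hc.eq_inv_inv x y).symm

lemma neg_self_right (x : Fˣ) : c x (-x) = 1 := by
  simpa [hc.one_right] using hc.neg_mul_right x 1

lemma sq_mul_right (x y : Fˣ) : c x (x ^ 2 * y) = c x y := by
  rw [show x ^ 2 * y = -x * (-x * y) by rw [← mul_assoc, neg_mul_neg, sq],
    hc.neg_mul_right, hc.neg_mul_right]

lemma self_eq_inv_right (x : Fˣ) : c x x = c x x⁻¹ := by
  simpa [sq, mul_assoc] using hc.sq_mul_right x x⁻¹

lemma inv_right_self_eq_neg_one (x : Fˣ) : c x x⁻¹ = c x (-1) := by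
  simpa using (hc.neg_mul_right x x⁻¹).symm

lemma mul_right_mul_inv_right (x y : Fˣ) : c x (x * y) * c x y⁻¹ = c x x⁻¹ := by
  have h := hc.mul_mul x x⁻¹ (x ^ 2 * y)
  rw [mul_inv_cancel, hc.one_left, mul_one, hc.inv_left,
    ← hc.sq_mul_right x (x ^ 2 * y)⁻¹] at h
  convert h.symm using 3
  · rw [sq, mul_assoc, inv_mul_cancel_left]
  · rw [mul_inv, mul_inv_cancel_left]

lemma neg_right (x y : Fˣ) : c x (-y) = c x (x * y) := by
  rw [← hc.sq_mul_right x (-y), ← hc.neg_mul_right x (x * y), mul_neg, neg_mul, ← mul_assoc, sq]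

lemma sq_left_mul_inv_right (x y : Fˣ) : c (x ^ 2) y * c x y⁻¹ = c x y := by
  have h := hc.mul_mul x x y
  rw [← sq, hc.self_eq_inv_right, ← hc.mul_right_mul_inv_right x y, mul_assoc] at h
  rw [mul_comm]
  exact mul_left_cancel h

lemma sq_right_mul_swap (x y : Fˣ) : c x (y ^ 2) * c y x = c x y := by
  have h := hc.mul_mul x y (-(x * y))
  rwa [hc.neg_self_right, mul_one,
    show y * -(x * y) = -x * y ^ 2 by rw [mul_neg, neg_mul, sq, mul_left_comm], hc.neg_mul_right,
    show -(x * y) = -y * x by rw [neg_mul, mul_comm], hc.neg_mul_right, eq_comm] at h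

lemma mul_swap_mul_mul_inv (x y : Fˣ) :
    c x y * c y x * c (x * y) (x * y)⁻¹ = c x x⁻¹ * c y y⁻¹ := by
  have h := hc.mul_mul x y (x * y)⁻¹
  rw [show y * (x * y)⁻¹ = x⁻¹ by group, ← hc.sq_mul_right y (x * y)⁻¹,
    show y ^ 2 * (x * y)⁻¹ = y * x⁻¹ by group] at h
  have hy := hc.mul_right_mul_inv_right y x⁻¹
  rw [inv_inv] at hy
  rw [mul_right_comm, h, mul_assoc, hy]

lemma sq_left_neg_one (x : Fˣ) : c (x ^ 2) (-1) = 1 := by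
  simpa [inv_neg_one] using hc.sq_left_mul_inv_right x (-1)

lemma sq_left_neg_right (x y : Fˣ) : c (x ^ 2) (-y) = c (x ^ 2) y := by
  have h₁ := hc.sq_left_mul_inv_right x (-y)
  rw [inv_neg, hc.neg_right x y⁻¹, hc.neg_right x y] at h₁
  have h₂ := hc.sq_left_mul_inv_right x y
  have h₃ := hc.mul_right_mul_inv_right x y
  have h₄ := hc.mul_right_mul_inv_right x y⁻¹
  rw [inv_inv] at h₄
  rw [eq_div_of_mul_eq' h₁, eq_div_of_mul_eq' h₂, eq_div_of_mul_eq' h₃, eq_div_of_mul_eq' h₄,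
    div_div_div_cancel_left]

lemma sq_mul_left_neg_one (x y : Fˣ) : c (x ^ 2 * y) (-1) = c y (-1) := by
  have h := hc.mul_mul (x ^ 2) y (-1)
  rw [mul_neg_one, hc.sq_left_neg_right] at h
  exact mul_left_cancel h

lemma sq_left_mul_swap (x y : Fˣ) : c (x ^ 2) y * c y (x ^ 2) = 1 := by
  have h := hc.mul_swap_mul_mul_inv (x ^ 2) y
  rw [hc.inv_right_self_eq_neg_one (x ^ 2 * y), hc.sq_mul_left_neg_one,
    hc.inv_right_self_eq_neg_one (x ^ 2), hc.sq_left_neg_one, one_mul,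
    ← hc.inv_right_self_eq_neg_one] at h
  exact mul_right_cancel (h.trans (one_mul _).symm)

lemma sq_left_eq_sq_right (x y : Fˣ) : c (x ^ 2) y = c x (y ^ 2) := by
  apply mul_right_cancel (b := c y x)
  rw [hc.sq_right_mul_swap, ← hc.sq_right_mul_swap y x, ← mul_assoc, hc.sq_left_mul_swap, one_mul]

lemma mul_left_sq_right (t u y : Fˣ) : c (t * u) (y ^ 2) = c t (y ^ 2) * c u (y ^ 2) := by
  -- write `c(z, y²) = c(z, y) / c(y, z)` and eliminate `c(tu, y)`, `c(y, tu)`, `c(t, uy)` by (B1)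
  have e₁ := hc.mul_mul t u y
  have e₂ := hc.mul_mul y t u
  have e₃ := hc.mul_mul t y u
  rw [mul_comm y t] at e₂
  rw [mul_comm y u] at e₃
  rw [eq_div_of_mul_eq' (hc.sq_right_mul_swap _ y), eq_div_of_mul_eq' (hc.sq_right_mul_swap t y),
    eq_div_of_mul_eq' (hc.sq_right_mul_swap u y), eq_div_of_mul_eq'' e₁,
    eq_div_of_mul_eq' e₂.symm, eq_div_of_mul_eq' e₃.symm]
  apply Additive.ofMul.injective
  simp only [ofMul_div, ofMul_mul]
  abel

lemma sq_left_mul_right (x u v : Fˣ) : c (x ^ 2) (u * v) = c (x ^ 2) u * c (x ^ 2) v := by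
  simp only [eq_inv_of_mul_eq_one_left (hc.sq_left_mul_swap x _), hc.mul_left_sq_right, mul_inv]

lemma map (f : M →* N) : IsSteinbergCocycle (fun u v => f (c u v)) where
  mul_mul t u v := by simp only [← map_mul, hc.mul_mul]
  one_one := by rw [hc.one_one, map_one]
  eq_inv_inv u v := by rw [hc.eq_inv_inv]
  eq_one_sub_mul u v w hw := by rw [hc.eq_one_sub_mul u v w hw]

lemma zpow_two_mul_right (u v : Fˣ) (k : ℤ) : c u (v ^ (2 * k)) = c (u ^ 2) v ^ k := by
  rw [mul_comm, zpow_mul, zpow_ofNat, ← hc.sq_left_eq_sq_right]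
  exact map_zpow (MonoidHom.mk' _ (hc.sq_left_mul_right u)) v k

lemma zpow_two_mul_left (u v : Fˣ) (k : ℤ) : c (u ^ (2 * k)) v = c (u ^ 2) v ^ k := by
  rw [mul_comm, zpow_mul, zpow_ofNat, hc.sq_left_eq_sq_right, hc.sq_left_eq_sq_right]
  exact map_zpow (MonoidHom.mk' (fun t => c t (v ^ 2)) (fun t u => hc.mul_left_sq_right t u v)) u k

end IsSteinbergCocycle

end SteinbergCocycle

namespace K2SL

variable {F} {M : Type*} [CommGroup M] {c : Fˣ → Fˣ → M}

lemma isSteinbergCocycle_sym : IsSteinbergCocycle (K2SL.sym F) where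
  mul_mul t u v := by
    have h := congrArg Abelianization.of
      (PresentedGroup.mk_eq_mk_of_mul_inv_mem (rels := K2SLRels F) (Or.inl ⟨t, u, v, rfl⟩))
    simp only [map_mul] at h
    exact h
  one_one := congrArg Abelianization.of (PresentedGroup.one_of_mem (Or.inr (Or.inl rfl)))
  eq_inv_inv u v := congrArg Abelianization.of (PresentedGroup.mk_eq_mk_of_mul_inv_mem
    (rels := K2SLRels F) (Or.inr (Or.inr (Or.inl ⟨u, v, rfl⟩))))
  eq_one_sub_mul u v w hw := congrArg Abelianization.of (PresentedGroup.mk_eq_mk_of_mul_inv_mem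
    (rels := K2SLRels F) (Or.inr (Or.inr (Or.inr ⟨u, v, w, hw, rfl⟩))))

noncomputable def lift (hc : IsSteinbergCocycle c) : K2SL F →* M :=
  Abelianization.lift <| PresentedGroup.toGroup (f := fun x => c x.1 x.2) <| by
    rintro r (⟨t, u, v, rfl⟩ | rfl | ⟨u, v, rfl⟩ | ⟨u, v, w, hw, rfl⟩) <;>
      simp only [map_mul, map_inv, FreeGroup.lift_apply_of, mul_inv_eq_one]
    exacts [hc.mul_mul t u v, hc.one_one, hc.eq_inv_inv u v, hc.eq_one_sub_mul u v w hw]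

@[simp]
lemma lift_sym (hc : IsSteinbergCocycle c) (u v : Fˣ) : lift hc (K2SL.sym F u v) = c u v :=
  (Abelianization.lift_apply_of _ _).trans (PresentedGroup.toGroup.of _)

@[ext]
lemma hom_ext {f g : K2SL F →* M} (h : ∀ u v, f (K2SL.sym F u v) = g (K2SL.sym F u v)) : f = g :=
  Abelianization.hom_ext _ _ (PresentedGroup.ext fun x => h x.1 x.2)

lemma sym_sq_mem_sqSubgroup (u v : Fˣ) : K2SL.sym F (u ^ 2) v ∈ K2SL.sqSubgroup F 1 :=
  Subgroup.subset_closure ⟨u, v, (zpow_one _).symm⟩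

end K2SL

section K2ACocycle

variable {F} {M : Type*} [CommGroup M] {n : ℕ}

structure IsK2ACocycle (A : Matrix (Fin n) (Fin n) ℤ) (c : Fin n → Fˣ → Fˣ → M) : Prop where
  isSteinbergCocycle : ∀ i, IsSteinbergCocycle (c i)
  zpow_right_eq_zpow_left : ∀ i j, i ≠ j → ∀ u v : Fˣ, c i u (v ^ A j i) = c j (u ^ A i j) v
  mul_left_zpow_right : ∀ i j, i ≠ j → ∀ t u v : Fˣ,
    c i (t * u) (v ^ A j i) = c i t (v ^ A j i) * c i u (v ^ A j i)
  zpow_left_mul_right : ∀ i j, i ≠ j → ∀ t u v : Fˣ,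
    c i (t ^ A j i) (u * v) = c i (t ^ A j i) u * c i (t ^ A j i) v

lemma IsK2ACocycle.sq_left_eq {A : Matrix (Fin n) (Fin n) ℤ} {c : Fin n → Fˣ → Fˣ → M}
    (hc : IsK2ACocycle A c) {i j : Fin n} (hne : i ≠ j) (hji : A j i = -2) (hij : A i j = -2)
    (u v : Fˣ) : c i (u ^ 2) v = c j (u ^ 2) v := by
  have h := hc.zpow_right_eq_zpow_left i j hne u v
  rw [hji, hij, show (-2 : ℤ) = 2 * -1 by norm_num, (hc.isSteinbergCocycle i).zpow_two_mul_right,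
    (hc.isSteinbergCocycle j).zpow_two_mul_left, zpow_neg_one, zpow_neg_one] at h
  exact inv_injective h

lemma isK2ACocycle_of_K2SL {A : Matrix (Fin n) (Fin n) ℤ} (hA : A.IsSymm)
    (heven : ∀ i j, i ≠ j → Even (A i j)) (f : Fin n → K2SL F →* M)
    (hf : ∀ i j, ∀ x ∈ K2SL.sqSubgroup F 1, f i x = f j x) :
    IsK2ACocycle A (fun i u v => f i (K2SL.sym F u v)) := by
  have hs := K2SL.isSteinbergCocycle_sym (F := F)
  have sq_eq (v : Fˣ) (k : ℤ) : v ^ (2 * k) = (v ^ k) ^ 2 := by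
    rw [mul_comm, zpow_mul, zpow_ofNat]
  refine ⟨fun i => hs.map (f i), fun i j hij u v => ?_, fun i j hij t u v => ?_,
    fun i j hij t u v => ?_⟩ <;> obtain ⟨k, hk⟩ := even_iff_exists_two_mul.mp (heven j i hij.symm)
  · rw [hA.apply j i, hk, hs.zpow_two_mul_right, hs.zpow_two_mul_left]
    exact hf i j _ (Subgroup.zpow_mem _ (K2SL.sym_sq_mem_sqSubgroup u v) k)
  · rw [hk, sq_eq, hs.mul_left_sq_right, map_mul]
  · rw [hk, sq_eq, hs.sq_left_mul_right, map_mul]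

end K2ACocycle

namespace K2A

variable {F} {M : Type*} [CommGroup M] {n : ℕ} {A : Matrix (Fin n) (Fin n) ℤ}
  {c : Fin n → Fˣ → Fˣ → M}

lemma isK2ACocycle_c : IsK2ACocycle A (K2A.c F A) := by
  let π : FreeGroup (Fin n × Fˣ × Fˣ) →* K2A F A := Abelianization.of.comp (PresentedGroup.mk _)
  have rel {x y : FreeGroup (Fin n × Fˣ × Fˣ)} (h : x * y⁻¹ ∈ K2ARels F A) : π x = π y :=
    congrArg Abelianization.of (PresentedGroup.mk_eq_mk_of_mul_inv_mem h)
  have hπ (x : Fin n × Fˣ × Fˣ) : π (FreeGroup.of x) = K2A.c F A x.1 x.2.1 x.2.2 := rfl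
  refine ⟨fun i => ⟨fun t u v => ?_, ?_, fun u v => ?_, fun u v w hw => ?_⟩,
    fun i j hij u v => ?_, fun i j hij t u v => ?_, fun i j hij t u v => ?_⟩
  · simpa only [map_mul, hπ] using rel (Or.inl ⟨i, t, u, v, rfl⟩)
  · exact congrArg Abelianization.of (PresentedGroup.one_of_mem (Or.inr (Or.inl ⟨i, rfl⟩)))
  · exact rel (Or.inr (Or.inr (Or.inl ⟨i, u, v, rfl⟩)))
  · exact rel (Or.inr (Or.inr (Or.inr (Or.inl ⟨i, u, v, w, hw, rfl⟩))))
  · exact rel (Or.inr (Or.inr (Or.inr (Or.inr (Or.inl ⟨i, j, u, v, hij, rfl⟩)))))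
  · simpa only [map_mul, hπ] using
      rel (Or.inr (Or.inr (Or.inr (Or.inr (Or.inr (Or.inl ⟨i, j, t, u, v, hij, rfl⟩))))))
  · simpa only [map_mul, hπ] using
      rel (Or.inr (Or.inr (Or.inr (Or.inr (Or.inr (Or.inr ⟨i, j, t, u, v, hij, rfl⟩))))))

noncomputable def lift (hc : IsK2ACocycle A c) : K2A F A →* M :=
  Abelianization.lift <| PresentedGroup.toGroup (f := fun x => c x.1 x.2.1 x.2.2) <| by
    rintro r (⟨i, t, u, v, rfl⟩ | ⟨i, rfl⟩ | ⟨i, u, v, rfl⟩ | ⟨i, u, v, w, hw, rfl⟩ |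
      ⟨i, j, u, v, hij, rfl⟩ | ⟨i, j, t, u, v, hij, rfl⟩ | ⟨i, j, t, u, v, hij, rfl⟩) <;>
      simp only [map_mul, map_inv, FreeGroup.lift_apply_of, mul_inv_eq_one]
    exacts [(hc.isSteinbergCocycle i).mul_mul t u v, (hc.isSteinbergCocycle i).one_one,
      (hc.isSteinbergCocycle i).eq_inv_inv u v, (hc.isSteinbergCocycle i).eq_one_sub_mul u v w hw,
      hc.zpow_right_eq_zpow_left i j hij u v, hc.mul_left_zpow_right i j hij t u v,
      hc.zpow_left_mul_right i j hij t u v]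

@[simp]
lemma lift_c (hc : IsK2ACocycle A c) (i : Fin n) (u v : Fˣ) : lift hc (K2A.c F A i u v) = c i u v :=
  (Abelianization.lift_apply_of _ _).trans (PresentedGroup.toGroup.of _)

@[ext]
lemma hom_ext {f g : K2A F A →* M} (h : ∀ i u v, f (K2A.c F A i u v) = g (K2A.c F A i u v)) :
    f = g :=
  Abelianization.hom_ext _ _ (PresentedGroup.ext fun x => h x.1 x.2.1 x.2.2)

noncomputable def ofK2SL (A : Matrix (Fin n) (Fin n) ℤ) (i : Fin n) : K2SL F →* K2A F A :=
  K2SL.lift (isK2ACocycle_c.isSteinbergCocycle i)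

@[simp]
lemma ofK2SL_sym (i : Fin n) (u v : Fˣ) : ofK2SL A i (K2SL.sym F u v) = K2A.c F A i u v :=
  K2SL.lift_sym _ u v

lemma sqSubgroup_le_ker_ofK2SL_div {i j : Fin n} (hne : i ≠ j) (hji : A j i = -2)
    (hij : A i j = -2) : K2SL.sqSubgroup F 1 ≤ (ofK2SL A i / ofK2SL A j).ker := by
  refine (Subgroup.closure_le _).mpr ?_
  rintro _ ⟨u, v, rfl⟩
  rw [SetLike.mem_coe, MonoidHom.mem_ker, zpow_one, MonoidHom.div_apply, ofK2SL_sym, ofK2SL_sym,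
    isK2ACocycle_c.sq_left_eq hne hji hij, div_self']

noncomputable def quotDivHom {i j : Fin n} (hne : i ≠ j) (hji : A j i = -2) (hij : A i j = -2) :
    K2SL F ⧸ K2SL.sqSubgroup F 1 →* K2A F A :=
  QuotientGroup.lift _ (ofK2SL A i / ofK2SL A j) (sqSubgroup_le_ker_ofK2SL_div hne hji hij)

end K2A

section Rank3

variable {F} {A : Matrix (Fin 3) (Fin 3) ℤ} (hA : A.IsSymm) (heven : ∀ i j, i ≠ j → Even (A i j))
  (h₀₁ : A 0 1 = -2) (h₁₂ : A 1 2 = -2)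

noncomputable def K2SL.stairHom : Fin 3 →
    (K2SL F →* K2SL F × (K2SL F ⧸ K2SL.sqSubgroup F 1) × (K2SL F ⧸ K2SL.sqSubgroup F 1)) :=
  ![(MonoidHom.id _).prod 1, (MonoidHom.id _).prod ((QuotientGroup.mk' _).prod 1),
    (MonoidHom.id _).prod ((QuotientGroup.mk' _).prod (QuotientGroup.mk' _))]

lemma K2SL.stairHom_of_mem (i : Fin 3) {x : K2SL F} (hx : x ∈ K2SL.sqSubgroup F 1) :
    stairHom i x = (x, 1, 1) := by
  have : (x : K2SL F ⧸ K2SL.sqSubgroup F 1) = 1 := (QuotientGroup.eq_one_iff x).mpr hx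
  fin_cases i <;> simp [stairHom, this, Prod.one_eq_mk]

namespace K2A

noncomputable def toProd :
    K2A F A →* K2SL F × (K2SL F ⧸ K2SL.sqSubgroup F 1) × (K2SL F ⧸ K2SL.sqSubgroup F 1) :=
  lift <| isK2ACocycle_of_K2SL hA heven K2SL.stairHom fun i j _ hx => by
    rw [K2SL.stairHom_of_mem i hx, K2SL.stairHom_of_mem j hx]

noncomputable def ofProd :
    K2SL F × (K2SL F ⧸ K2SL.sqSubgroup F 1) × (K2SL F ⧸ K2SL.sqSubgroup F 1) →* K2A F A :=
  (ofK2SL A 0).coprod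
    ((quotDivHom (by decide : (1 : Fin 3) ≠ 0) h₀₁ ((hA.apply 0 1).trans h₀₁)).coprod
      (quotDivHom (by decide : (2 : Fin 3) ≠ 1) h₁₂ ((hA.apply 1 2).trans h₁₂)))

lemma ofProd_comp_toProd :
    (ofProd hA h₀₁ h₁₂).comp (toProd (F := F) hA heven) = MonoidHom.id _ := by
  ext i u v
  fin_cases i <;> simp [toProd, ofProd, K2SL.stairHom, quotDivHom]

lemma toProd_comp_ofProd :
    (toProd (F := F) hA heven).comp (ofProd hA h₀₁ h₁₂) = MonoidHom.id _ := by
  rw [ofProd, MonoidHom.comp_coprod, MonoidHom.comp_coprod, ← MonoidHom.coprod_inl_inr]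
  refine congrArg₂ _ (K2SL.hom_ext fun u v => by simp [toProd, K2SL.stairHom])
    ((congrArg₂ _ ?_ ?_).trans (MonoidHom.coprod_unique _)) <;>
    exact QuotientGroup.monoidHom_ext _
      (K2SL.hom_ext fun u v => by simp [toProd, K2SL.stairHom, quotDivHom])

noncomputable def mulEquivProd :
    K2A F A ≃* K2SL F × (K2SL F ⧸ K2SL.sqSubgroup F 1) × (K2SL F ⧸ K2SL.sqSubgroup F 1) :=
  MonoidHom.toMulEquiv _ _ (ofProd_comp_toProd hA heven h₀₁ h₁₂)
    (toProd_comp_ofProd hA heven h₀₁ h₁₂)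

end K2A

end Rank3

/-- For the GCMs with rows `(2,-2,-2),(-2,2,-2),(-2,-2,2)` and `(2,-2,0),(-2,2,-2),(0,-2,2)`,
`K₂(A,F) ≅ K₂(2,F) × (K₂(2,F)/⟨{u²,v}⟩) × (K₂(2,F)/⟨{u²,v}⟩)` in both cases. -/
theorem K2A_rank3_class3 (F : Type) [Field F] :
    Nonempty (K2A F !![2, -2, -2; -2, 2, -2; -2, -2, 2] ≃*
      (K2SL F × (K2SL F ⧸ K2SL.sqSubgroup F 1) × (K2SL F ⧸ K2SL.sqSubgroup F 1))) ∧
    Nonempty (K2A F !![2, -2, 0; -2, 2, -2; 0, -2, 2] ≃*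
      (K2SL F × (K2SL F ⧸ K2SL.sqSubgroup F 1) × (K2SL F ⧸ K2SL.sqSubgroup F 1))) :=
  ⟨⟨K2A.mulEquivProd (by decide) (fun i j _ => by fin_cases i <;> fin_cases j <;> decide) rfl rfl⟩,
    ⟨K2A.mulEquivProd (by decide) (fun i j _ => by fin_cases i <;> fin_cases j <;> decide) rfl rfl⟩⟩
end

section
/- Let F be a field and let A be the 3×3 generalized Cartan matrix with rows (2,−1,−2), (−2,2,−2), (−2,−2,2). Then K_2(A,F) is isomorphic to (K_2(2,F)/⟨{u²,v}⟩) × (K_2(2,F)/⟨{u²,v}⟩). -/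
/-!
Common definitions: presentations of the abelian groups `K₂(F)`, `K₂(2,F)` and `K₂(A,F)`
(Rehmann–Morita).  "The abelian group generated by symbols subject to relations" is
formalized as the abelianization of the corresponding presented group.
-/

variable (F : Type) [Field F]

/-! ### Auxiliary machinery for the proof of the main theorem -/

lemma presRel {α : Type*} {rels : Set (FreeGroup α)} {r : FreeGroup α} (hr : r ∈ rels) :
    PresentedGroup.mk rels r = 1 :=
  (QuotientGroup.eq_one_iff r).2 (Subgroup.subset_normalClosure hr)

/-! #### Relations in `K₂(2,F)` -/

def slWord : FreeGroup (Fˣ × Fˣ) →* K2SL F :=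
  (Abelianization.of).comp (PresentedGroup.mk (K2SLRels F))

lemma slWord_of (p : Fˣ × Fˣ) : slWord F (FreeGroup.of p) = K2SL.sym F p.1 p.2 := rfl

lemma slWord_rel {r} (hr : r ∈ K2SLRels F) : slWord F r = 1 := by
  rw [show slWord F r = Abelianization.of (PresentedGroup.mk _ r) from rfl, presRel hr, map_one]; rfl

lemma K2SL.B1 (t u v : Fˣ) :
    K2SL.sym F t u * K2SL.sym F (t*u) v = K2SL.sym F t (u*v) * K2SL.sym F u v := by
  have h := slWord_rel F (Or.inl ⟨t, u, v, rfl⟩)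
  simp only [map_mul, map_inv, slWord_of] at h
  exact mul_inv_eq_one.mp h

lemma K2SL.B2 : K2SL.sym F 1 1 = 1 := slWord_rel F (Or.inr (Or.inl rfl))

lemma K2SL.B3 (u v : Fˣ) : K2SL.sym F u v = K2SL.sym F u⁻¹ v⁻¹ := by
  have h := slWord_rel F (Or.inr (Or.inr (Or.inl ⟨u, v, rfl⟩)))
  simp only [map_mul, map_inv, slWord_of] at h
  exact mul_inv_eq_one.mp h

lemma K2SL.B4 (u v w : Fˣ) (hw : (w : F) = 1 - (u : F)) :
    K2SL.sym F u v = K2SL.sym F u (w * v) := by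
  have h := slWord_rel F (Or.inr (Or.inr (Or.inr ⟨u, v, w, hw, rfl⟩)))
  simp only [map_mul, map_inv, slWord_of] at h
  exact mul_inv_eq_one.mp h

/-! #### The quotient `Q = K₂(2,F)/⟨{u²,v}⟩` and identities in it -/

noncomputable abbrev QGrp : Type := K2SL F ⧸ K2SL.sqSubgroup F 1

noncomputable def qsym (u v : Fˣ) : QGrp F :=
  QuotientGroup.mk' (K2SL.sqSubgroup F 1) (K2SL.sym F u v)

lemma qB1 (t u v : Fˣ) : qsym F t u * qsym F (t*u) v = qsym F t (u*v) * qsym F u v := by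
  unfold qsym; rw [← map_mul, ← map_mul, K2SL.B1]

lemma qB2 : qsym F 1 1 = 1 := by unfold qsym; rw [K2SL.B2, map_one]

lemma qB3 (u v : Fˣ) : qsym F u v = qsym F u⁻¹ v⁻¹ := by unfold qsym; rw [K2SL.B3]

lemma qB4 (u v w : Fˣ) (hw : (w : F) = 1 - (u : F)) : qsym F u v = qsym F u (w * v) := by
  unfold qsym; rw [K2SL.B4 F u v w hw]

lemma q_sq_left (u v : Fˣ) : qsym F (u*u) v = 1 := by
  unfold qsym
  rw [QuotientGroup.mk'_apply, QuotientGroup.eq_one_iff]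
  apply Subgroup.subset_closure
  exact ⟨u, v, by rw [zpow_one, pow_two]⟩

lemma q_one_right (t : Fˣ) : qsym F t 1 = 1 := by
  have h := qB1 F t 1 1
  simp only [mul_one, qB2] at h
  exact mul_eq_right.mp h

lemma q_one_left (v : Fˣ) : qsym F 1 v = 1 := by
  have h := qB1 F 1 1 v
  simp only [one_mul, qB2, q_one_right] at h
  exact mul_eq_right.mp h.symm

lemma q_dag (u v : Fˣ) : qsym F u (u*v) = qsym F u u * (qsym F u v)⁻¹ := by
  have h := qB1 F u u v
  rw [q_sq_left, mul_one] at h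
  exact eq_mul_inv_of_mul_eq h.symm

lemma q_ddag (u v : Fˣ) : qsym F u (u*(u*v)) = qsym F u v := by
  rw [q_dag, q_dag, mul_inv_rev, inv_inv, mul_comm _ ((qsym F u u)⁻¹), mul_inv_cancel_left]

lemma q_invsq (x : Fˣ) : qsym F x⁻¹ (x*x) = 1 := by
  have h := q_ddag F x⁻¹ (x*x)
  rw [show x⁻¹*(x⁻¹*(x*x)) = 1 by group, q_one_right] at h
  exact h.symm

lemma q_spade (x v : Fˣ) : qsym F x x⁻¹ = qsym F x (x⁻¹*v) * qsym F x⁻¹ v := by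
  have h := qB1 F x x⁻¹ v
  rwa [mul_inv_cancel, q_one_left, mul_one] at h

lemma q_selfinv (x : Fˣ) : qsym F x x⁻¹ = qsym F x x := by
  have h := q_spade F x x⁻¹
  rw [show qsym F x (x⁻¹*x⁻¹) = 1 by
        rw [qB3, mul_inv_rev, inv_inv]; exact q_invsq F x, one_mul] at h
  exact h.trans (qB3 F x x).symm

lemma q_inv_left (x w : Fˣ) : qsym F x⁻¹ w = qsym F x w := by
  have key : ∀ z : Fˣ, qsym F x⁻¹ (x*z) = qsym F x (x*z) := by
    intro z
    have h := q_spade F x (x*z)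
    rw [show x⁻¹*(x*z) = z by group, q_selfinv] at h
    have h2 := q_dag F x z
    rw [h2]
    exact (eq_inv_mul_of_mul_eq h.symm).trans (mul_comm _ _)
  have hkey := key (x⁻¹ * w)
  rwa [show x * (x⁻¹ * w) = w by group] at hkey

lemma q_inv_right (x w : Fˣ) : qsym F x w⁻¹ = qsym F x w := by
  rw [qB3 F x w⁻¹, inv_inv, q_inv_left]

lemma q_13 (t u : Fˣ) : qsym F t u * qsym F (t*u) u = qsym F u u := by
  have h := qB1 F t u u⁻¹
  rwa [mul_inv_cancel, q_one_right, one_mul, q_selfinv, q_inv_right] at h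

lemma q_sq_right (t u : Fˣ) : qsym F t (u*u) = 1 := by
  have h := qB1 F t u u
  rw [q_13] at h
  exact (mul_eq_right.mp h.symm)

lemma q_zsq_right (t u : Fˣ) : qsym F t (u ^ (-2:ℤ)) = 1 := by
  rw [show u ^ (-2:ℤ) = u⁻¹ * u⁻¹ by group]; exact q_sq_right F t u⁻¹

lemma q_zsq_left (u v : Fˣ) : qsym F (u ^ (-2:ℤ)) v = 1 := by
  rw [show u ^ (-2:ℤ) = u⁻¹ * u⁻¹ by group]; exact q_sq_left F u⁻¹ v

/-! #### Relations in `K₂(A,F)` -/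

section Arels
variable {n : ℕ} (A : Matrix (Fin n) (Fin n) ℤ)

def aWord : FreeGroup (Fin n × Fˣ × Fˣ) →* K2A F A :=
  (Abelianization.of).comp (PresentedGroup.mk (K2ARels F A))

lemma aWord_of (p : Fin n × Fˣ × Fˣ) : aWord F A (FreeGroup.of p) = K2A.c F A p.1 p.2.1 p.2.2 :=
  rfl

lemma aWord_rel {r} (hr : r ∈ K2ARels F A) : aWord F A r = 1 := by
  rw [show aWord F A r = Abelianization.of (PresentedGroup.mk _ r) from rfl, presRel hr, map_one]; rfl

lemma K2A.L1 (i : Fin n) (t u v : Fˣ) :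
    K2A.c F A i t u * K2A.c F A i (t*u) v = K2A.c F A i t (u*v) * K2A.c F A i u v := by
  have h := aWord_rel F A (Or.inl ⟨i, t, u, v, rfl⟩)
  simp only [map_mul, map_inv, aWord_of] at h
  exact mul_inv_eq_one.mp h

lemma K2A.L2 (i : Fin n) : K2A.c F A i 1 1 = 1 := aWord_rel F A (Or.inr (Or.inl ⟨i, rfl⟩))

lemma K2A.L3 (i : Fin n) (u v : Fˣ) : K2A.c F A i u v = K2A.c F A i u⁻¹ v⁻¹ := by
  have h := aWord_rel F A (Or.inr (Or.inr (Or.inl ⟨i, u, v, rfl⟩)))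
  simp only [map_mul, map_inv, aWord_of] at h
  exact mul_inv_eq_one.mp h

lemma K2A.L4 (i : Fin n) (u v w : Fˣ) (hw : (w : F) = 1 - (u : F)) :
    K2A.c F A i u v = K2A.c F A i u (w * v) := by
  have h := aWord_rel F A (Or.inr (Or.inr (Or.inr (Or.inl ⟨i, u, v, w, hw, rfl⟩))))
  simp only [map_mul, map_inv, aWord_of] at h
  exact mul_inv_eq_one.mp h

lemma K2A.L5 {i j : Fin n} (hij : i ≠ j) (u v : Fˣ) :
    K2A.c F A i u (v ^ (A j i)) = K2A.c F A j (u ^ (A i j)) v := by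
  have h := aWord_rel F A (Or.inr (Or.inr (Or.inr (Or.inr (Or.inl ⟨i, j, u, v, hij, rfl⟩)))))
  simp only [map_mul, map_inv, aWord_of] at h
  exact mul_inv_eq_one.mp h

lemma K2A.L6 {i j : Fin n} (hij : i ≠ j) (t u v : Fˣ) :
    K2A.c F A i (t*u) (v ^ (A j i)) =
      K2A.c F A i t (v ^ (A j i)) * K2A.c F A i u (v ^ (A j i)) := by
  have h := aWord_rel F A
    (Or.inr (Or.inr (Or.inr (Or.inr (Or.inr (Or.inl ⟨i, j, t, u, v, hij, rfl⟩))))))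
  simp only [map_mul, map_inv, aWord_of] at h
  exact mul_inv_eq_one.mp h

lemma K2A.L7 {i j : Fin n} (hij : i ≠ j) (t u v : Fˣ) :
    K2A.c F A i (t ^ (A j i)) (u*v) =
      K2A.c F A i (t ^ (A j i)) u * K2A.c F A i (t ^ (A j i)) v := by
  have h := aWord_rel F A
    (Or.inr (Or.inr (Or.inr (Or.inr (Or.inr (Or.inr ⟨i, j, t, u, v, hij, rfl⟩))))))
  simp only [map_mul, map_inv, aWord_of] at h
  exact mul_inv_eq_one.mp h

end Arels

/-! #### Derived identities in `K₂(A,F)` for the matrix No. 59 -/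

abbrev M59 : Matrix (Fin 3) (Fin 3) ℤ := !![2, -1, -2; -2, 2, -2; -2, -2, 2]

lemma c1_mul_left (a b w : Fˣ) :
    K2A.c F M59 1 (a*b) w = K2A.c F M59 1 a w * K2A.c F M59 1 b w := by
  have h := K2A.L6 F M59 (i := 1) (j := 0) (by decide) a b w⁻¹
  rw [show M59 0 1 = (-1:ℤ) from rfl] at h
  simpa using h

lemma c1_mul_right (a u v : Fˣ) :
    K2A.c F M59 1 a (u*v) = K2A.c F M59 1 a u * K2A.c F M59 1 a v := by
  have h := K2A.L7 F M59 (i := 1) (j := 0) (by decide) a⁻¹ u v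
  rw [show M59 0 1 = (-1:ℤ) from rfl] at h
  simpa using h

lemma c1_one_left (w : Fˣ) : K2A.c F M59 1 1 w = 1 := by
  have h := c1_mul_left F 1 1 w
  rw [one_mul] at h
  exact mul_eq_right.mp h.symm

lemma c1_inv_left (a w : Fˣ) : K2A.c F M59 1 a⁻¹ w = (K2A.c F M59 1 a w)⁻¹ := by
  have h := c1_mul_left F a⁻¹ a w
  rw [inv_mul_cancel, c1_one_left] at h
  exact eq_inv_of_mul_eq_one_left h.symm

lemma c1_one_right (a : Fˣ) : K2A.c F M59 1 a 1 = 1 := by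
  have h := c1_mul_right F a 1 1
  rw [one_mul] at h
  exact mul_eq_right.mp h.symm

lemma c1_inv_right (a v : Fˣ) : K2A.c F M59 1 a v⁻¹ = (K2A.c F M59 1 a v)⁻¹ := by
  have h := c1_mul_right F a v⁻¹ v
  rw [inv_mul_cancel, c1_one_right] at h
  exact eq_inv_of_mul_eq_one_left h.symm

lemma c1_swap (u v : Fˣ) : K2A.c F M59 1 u⁻¹ v = K2A.c F M59 1 u v⁻¹ := by
  rw [c1_inv_left, c1_inv_right]

lemma e_R10 (u v : Fˣ) : K2A.c F M59 1 u v⁻¹ = K2A.c F M59 0 (u ^ (-2:ℤ)) v := by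
  have h := K2A.L5 F M59 (i := 1) (j := 0) (by decide) u v
  rw [show M59 0 1 = (-1:ℤ) from rfl, show M59 1 0 = (-2:ℤ) from rfl] at h
  simpa using h

lemma e_R01 (u v : Fˣ) : K2A.c F M59 0 u (v ^ (-2:ℤ)) = K2A.c F M59 1 u⁻¹ v := by
  have h := K2A.L5 F M59 (i := 0) (j := 1) (by decide) u v
  rw [show M59 1 0 = (-2:ℤ) from rfl, show M59 0 1 = (-1:ℤ) from rfl] at h
  simpa using h

lemma e_R02 (u v : Fˣ) : K2A.c F M59 0 u (v ^ (-2:ℤ)) = K2A.c F M59 2 (u ^ (-2:ℤ)) v := by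
  have h := K2A.L5 F M59 (i := 0) (j := 2) (by decide) u v
  rwa [show M59 2 0 = (-2:ℤ) from rfl, show M59 0 2 = (-2:ℤ) from rfl] at h

lemma e_R12 (u v : Fˣ) : K2A.c F M59 1 u (v ^ (-2:ℤ)) = K2A.c F M59 2 (u ^ (-2:ℤ)) v := by
  have h := K2A.L5 F M59 (i := 1) (j := 2) (by decide) u v
  rwa [show M59 2 1 = (-2:ℤ) from rfl, show M59 1 2 = (-2:ℤ) from rfl] at h

lemma e_R20 (u v : Fˣ) : K2A.c F M59 2 u (v ^ (-2:ℤ)) = K2A.c F M59 0 (u ^ (-2:ℤ)) v := by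
  have h := K2A.L5 F M59 (i := 2) (j := 0) (by decide) u v
  rwa [show M59 0 2 = (-2:ℤ) from rfl, show M59 2 0 = (-2:ℤ) from rfl] at h

lemma k0_left (u v : Fˣ) : K2A.c F M59 0 (u ^ (-2:ℤ)) v = 1 := by
  have hA : K2A.c F M59 0 (u ^ (-2:ℤ)) v = K2A.c F M59 1 u (v ^ (-2:ℤ)) :=
    ((((e_R10 F u v).symm.trans (c1_swap F u v).symm).trans (e_R01 F u v).symm).trans
      (e_R02 F u v)).trans (e_R12 F u v).symm
  have hB : K2A.c F M59 1 u (v ^ (-2:ℤ)) =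
      K2A.c F M59 0 (u ^ (-2:ℤ)) v * K2A.c F M59 0 (u ^ (-2:ℤ)) v := by
    rw [show v ^ (-2:ℤ) = v⁻¹ * v⁻¹ by group, c1_mul_right, e_R10]
  have h : K2A.c F M59 0 (u ^ (-2:ℤ)) v * K2A.c F M59 0 (u ^ (-2:ℤ)) v =
      K2A.c F M59 0 (u ^ (-2:ℤ)) v := (hA.trans hB).symm
  exact mul_eq_right.mp h

lemma k0_right (u v : Fˣ) : K2A.c F M59 0 u (v ^ (-2:ℤ)) = 1 :=
  (((e_R01 F u v).trans (c1_swap F u v)).trans (e_R10 F u v)).trans (k0_left F u v)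

lemma k1_triv (u v : Fˣ) : K2A.c F M59 1 u v = 1 := by
  have h := (e_R10 F u v⁻¹).trans (k0_left F u v⁻¹)
  rwa [inv_inv] at h

lemma k2_left (u v : Fˣ) : K2A.c F M59 2 (u ^ (-2:ℤ)) v = 1 :=
  (e_R02 F u v).symm.trans (k0_right F u v)

lemma k2_right (u v : Fˣ) : K2A.c F M59 2 u (v ^ (-2:ℤ)) = 1 :=
  (e_R20 F u v).trans (k0_left F u v)

lemma k0_sq (u v : Fˣ) : K2A.c F M59 0 (u ^ 2) v = 1 := by
  have h := k0_left F u⁻¹ v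
  rwa [show (u⁻¹ : Fˣ) ^ (-2:ℤ) = u ^ 2 by group] at h

lemma k2_sq (u v : Fˣ) : K2A.c F M59 2 (u ^ 2) v = 1 := by
  have h := k2_left F u⁻¹ v
  rwa [show (u⁻¹ : Fˣ) ^ (-2:ℤ) = u ^ 2 by group] at h

/-! #### The map `K₂(A,F) → Q × Q` -/

noncomputable def f0gen (p : Fin 3 × Fˣ × Fˣ) : QGrp F := ![qsym F p.2.1 p.2.2, 1, 1] p.1

noncomputable def f2gen (p : Fin 3 × Fˣ × Fˣ) : QGrp F := ![1, 1, qsym F p.2.1 p.2.2] p.1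

lemma f0gen_rels : ∀ r ∈ K2ARels F M59, FreeGroup.lift (f0gen F) r = 1 := by
  rintro r (⟨i, t, u, v, rfl⟩ | ⟨i, rfl⟩ | ⟨i, u, v, rfl⟩ | ⟨i, u, v, w, hw, rfl⟩ |
    ⟨i, j, u, v, hij, rfl⟩ | ⟨i, j, t, u, v, hij, rfl⟩ | ⟨i, j, t, u, v, hij, rfl⟩) <;>
      simp only [map_mul, map_inv, FreeGroup.lift_apply_of]
  · fin_cases i
    · exact mul_inv_eq_one.mpr (qB1 F t u v)
    · simp [f0gen]
    · simp [f0gen]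
  · fin_cases i
    · exact qB2 F
    · simp [f0gen]
    · simp [f0gen]
  · fin_cases i
    · exact mul_inv_eq_one.mpr (qB3 F u v)
    · simp [f0gen]
    · simp [f0gen]
  · fin_cases i
    · exact mul_inv_eq_one.mpr (qB4 F u v w hw)
    · simp [f0gen]
    · simp [f0gen]
  · fin_cases i <;> fin_cases j
    · exact absurd rfl hij
    · exact mul_inv_eq_one.mpr (q_zsq_right F u v)
    · exact mul_inv_eq_one.mpr (q_zsq_right F u v)
    · exact mul_inv_eq_one.mpr (q_zsq_left F u v).symm
    · exact absurd rfl hij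
    · simp [f0gen]
    · exact mul_inv_eq_one.mpr (q_zsq_left F u v).symm
    · simp [f0gen]
    · exact absurd rfl hij
  · fin_cases i <;> fin_cases j
    · exact absurd rfl hij
    · show qsym F (t*u) (v ^ (-2:ℤ)) *
          (qsym F t (v ^ (-2:ℤ)) * qsym F u (v ^ (-2:ℤ)))⁻¹ = 1
      rw [q_zsq_right F (t*u) v, q_zsq_right F t v, q_zsq_right F u v]; simp
    · show qsym F (t*u) (v ^ (-2:ℤ)) *
          (qsym F t (v ^ (-2:ℤ)) * qsym F u (v ^ (-2:ℤ)))⁻¹ = 1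
      rw [q_zsq_right F (t*u) v, q_zsq_right F t v, q_zsq_right F u v]; simp
    · simp [f0gen]
    · exact absurd rfl hij
    · simp [f0gen]
    · simp [f0gen]
    · simp [f0gen]
    · exact absurd rfl hij
  · fin_cases i <;> fin_cases j
    · exact absurd rfl hij
    · show qsym F (t ^ (-2:ℤ)) (u*v) *
          (qsym F (t ^ (-2:ℤ)) u * qsym F (t ^ (-2:ℤ)) v)⁻¹ = 1
      rw [q_zsq_left F t (u*v), q_zsq_left F t u, q_zsq_left F t v]; simp
    · show qsym F (t ^ (-2:ℤ)) (u*v) *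
          (qsym F (t ^ (-2:ℤ)) u * qsym F (t ^ (-2:ℤ)) v)⁻¹ = 1
      rw [q_zsq_left F t (u*v), q_zsq_left F t u, q_zsq_left F t v]; simp
    · simp [f0gen]
    · exact absurd rfl hij
    · simp [f0gen]
    · simp [f0gen]
    · simp [f0gen]
    · exact absurd rfl hij

lemma f2gen_rels : ∀ r ∈ K2ARels F M59, FreeGroup.lift (f2gen F) r = 1 := by
  rintro r (⟨i, t, u, v, rfl⟩ | ⟨i, rfl⟩ | ⟨i, u, v, rfl⟩ | ⟨i, u, v, w, hw, rfl⟩ |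
    ⟨i, j, u, v, hij, rfl⟩ | ⟨i, j, t, u, v, hij, rfl⟩ | ⟨i, j, t, u, v, hij, rfl⟩) <;>
      simp only [map_mul, map_inv, FreeGroup.lift_apply_of]
  · fin_cases i
    · simp [f2gen]
    · simp [f2gen]
    · exact mul_inv_eq_one.mpr (qB1 F t u v)
  · fin_cases i
    · simp [f2gen]
    · simp [f2gen]
    · exact qB2 F
  · fin_cases i
    · simp [f2gen]
    · simp [f2gen]
    · exact mul_inv_eq_one.mpr (qB3 F u v)
  · fin_cases i
    · simp [f2gen]
    · simp [f2gen]
    · exact mul_inv_eq_one.mpr (qB4 F u v w hw)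
  · fin_cases i <;> fin_cases j
    · exact absurd rfl hij
    · simp [f2gen]
    · exact mul_inv_eq_one.mpr (q_zsq_left F u v).symm
    · simp [f2gen]
    · exact absurd rfl hij
    · exact mul_inv_eq_one.mpr (q_zsq_left F u v).symm
    · exact mul_inv_eq_one.mpr (q_zsq_right F u v)
    · exact mul_inv_eq_one.mpr (q_zsq_right F u v)
    · exact absurd rfl hij
  · fin_cases i <;> fin_cases j
    · exact absurd rfl hij
    · simp [f2gen]
    · simp [f2gen]
    · simp [f2gen]
    · exact absurd rfl hij
    · simp [f2gen]
    · show qsym F (t*u) (v ^ (-2:ℤ)) *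
          (qsym F t (v ^ (-2:ℤ)) * qsym F u (v ^ (-2:ℤ)))⁻¹ = 1
      rw [q_zsq_right F (t*u) v, q_zsq_right F t v, q_zsq_right F u v]; simp
    · show qsym F (t*u) (v ^ (-2:ℤ)) *
          (qsym F t (v ^ (-2:ℤ)) * qsym F u (v ^ (-2:ℤ)))⁻¹ = 1
      rw [q_zsq_right F (t*u) v, q_zsq_right F t v, q_zsq_right F u v]; simp
    · exact absurd rfl hij
  · fin_cases i <;> fin_cases j
    · exact absurd rfl hij
    · simp [f2gen]
    · simp [f2gen]
    · simp [f2gen]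
    · exact absurd rfl hij
    · simp [f2gen]
    · show qsym F (t ^ (-2:ℤ)) (u*v) *
          (qsym F (t ^ (-2:ℤ)) u * qsym F (t ^ (-2:ℤ)) v)⁻¹ = 1
      rw [q_zsq_left F t (u*v), q_zsq_left F t u, q_zsq_left F t v]; simp
    · show qsym F (t ^ (-2:ℤ)) (u*v) *
          (qsym F (t ^ (-2:ℤ)) u * qsym F (t ^ (-2:ℤ)) v)⁻¹ = 1
      rw [q_zsq_left F t (u*v), q_zsq_left F t u, q_zsq_left F t v]; simp
    · exact absurd rfl hij

noncomputable def phi0 : K2A F M59 →* QGrp F :=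
  Abelianization.lift (PresentedGroup.toGroup (f0gen_rels F))

noncomputable def phi2 : K2A F M59 →* QGrp F :=
  Abelianization.lift (PresentedGroup.toGroup (f2gen_rels F))

noncomputable def phi : K2A F M59 →* QGrp F × QGrp F := (phi0 F).prod (phi2 F)

lemma phi0_c (i : Fin 3) (u v : Fˣ) : phi0 F (K2A.c F M59 i u v) = f0gen F (i, u, v) := by
  exact (Abelianization.lift_apply_of _ _).trans (PresentedGroup.toGroup.of _)

lemma phi2_c (i : Fin 3) (u v : Fˣ) : phi2 F (K2A.c F M59 i u v) = f2gen F (i, u, v) := by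
  exact (Abelianization.lift_apply_of _ _).trans (PresentedGroup.toGroup.of _)

/-! #### The map `Q × Q → K₂(A,F)` -/

def g0gen (p : Fˣ × Fˣ) : K2A F M59 := K2A.c F M59 0 p.1 p.2

def g2gen (p : Fˣ × Fˣ) : K2A F M59 := K2A.c F M59 2 p.1 p.2

lemma g0gen_rels : ∀ r ∈ K2SLRels F, FreeGroup.lift (g0gen F) r = 1 := by
  rintro r (⟨t, u, v, rfl⟩ | rfl | ⟨u, v, rfl⟩ | ⟨u, v, w, hw, rfl⟩) <;>
      simp only [map_mul, map_inv, FreeGroup.lift_apply_of]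
  · exact mul_inv_eq_one.mpr (K2A.L1 F M59 0 t u v)
  · exact K2A.L2 F M59 0
  · exact mul_inv_eq_one.mpr (K2A.L3 F M59 0 u v)
  · exact mul_inv_eq_one.mpr (K2A.L4 F M59 0 u v w hw)

lemma g2gen_rels : ∀ r ∈ K2SLRels F, FreeGroup.lift (g2gen F) r = 1 := by
  rintro r (⟨t, u, v, rfl⟩ | rfl | ⟨u, v, rfl⟩ | ⟨u, v, w, hw, rfl⟩) <;>
      simp only [map_mul, map_inv, FreeGroup.lift_apply_of]
  · exact mul_inv_eq_one.mpr (K2A.L1 F M59 2 t u v)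
  · exact K2A.L2 F M59 2
  · exact mul_inv_eq_one.mpr (K2A.L3 F M59 2 u v)
  · exact mul_inv_eq_one.mpr (K2A.L4 F M59 2 u v w hw)

noncomputable def psi0 : K2SL F →* K2A F M59 :=
  Abelianization.lift (PresentedGroup.toGroup (g0gen_rels F))

noncomputable def psi2 : K2SL F →* K2A F M59 :=
  Abelianization.lift (PresentedGroup.toGroup (g2gen_rels F))

lemma psi0_sym (u v : Fˣ) : psi0 F (K2SL.sym F u v) = K2A.c F M59 0 u v := by
  exact (Abelianization.lift_apply_of _ _).trans (PresentedGroup.toGroup.of _)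

lemma psi2_sym (u v : Fˣ) : psi2 F (K2SL.sym F u v) = K2A.c F M59 2 u v := by
  exact (Abelianization.lift_apply_of _ _).trans (PresentedGroup.toGroup.of _)

lemma psi0_ker : K2SL.sqSubgroup F 1 ≤ (psi0 F).ker := by
  rw [K2SL.sqSubgroup, Subgroup.closure_le]
  rintro x ⟨u, v, rfl⟩
  have h : psi0 F ((K2SL.sym F (u ^ 2) v) ^ (1:ℤ)) = 1 := by
    rw [zpow_one, psi0_sym, k0_sq]
  exact h

lemma psi2_ker : K2SL.sqSubgroup F 1 ≤ (psi2 F).ker := by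
  rw [K2SL.sqSubgroup, Subgroup.closure_le]
  rintro x ⟨u, v, rfl⟩
  have h : psi2 F ((K2SL.sym F (u ^ 2) v) ^ (1:ℤ)) = 1 := by
    rw [zpow_one, psi2_sym, k2_sq]
  exact h

noncomputable def psiQ0 : QGrp F →* K2A F M59 :=
  QuotientGroup.lift (K2SL.sqSubgroup F 1) (psi0 F) (psi0_ker F)

noncomputable def psiQ2 : QGrp F →* K2A F M59 :=
  QuotientGroup.lift (K2SL.sqSubgroup F 1) (psi2 F) (psi2_ker F)

lemma psiQ0_q (u v : Fˣ) : psiQ0 F (qsym F u v) = K2A.c F M59 0 u v :=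
  (QuotientGroup.lift_mk' _ _ _).trans (psi0_sym F u v)

lemma psiQ2_q (u v : Fˣ) : psiQ2 F (qsym F u v) = K2A.c F M59 2 u v :=
  (QuotientGroup.lift_mk' _ _ _).trans (psi2_sym F u v)

noncomputable def psi : QGrp F × QGrp F →* K2A F M59 := (psiQ0 F).coprod (psiQ2 F)

lemma psi_apply (a b : QGrp F) : psi F (a, b) = psiQ0 F a * psiQ2 F b := rfl

/-! #### The two maps are mutually inverse -/

lemma prodHomExt {M N P : Type*} [Monoid M] [Monoid N] [Monoid P] {f g : M × N →* P}
    (h1 : ∀ m : M, f (m, 1) = g (m, 1)) (h2 : ∀ n : N, f (1, n) = g (1, n)) : f = g := by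
  ext x
  obtain ⟨m, n⟩ := x
  have hx : (m, n) = ((m, 1) : M × N) * ((1, n) : M × N) := by simp
  rw [hx, map_mul, map_mul, h1, h2]

lemma psi_comp_phi : (psi F).comp (phi F) = MonoidHom.id (K2A F M59) := by
  refine Abelianization.hom_ext _ _ (PresentedGroup.ext fun x => ?_)
  obtain ⟨i, u, v⟩ := x
  show psi F (phi F (K2A.c F M59 i u v)) = K2A.c F M59 i u v
  have hphi : phi F (K2A.c F M59 i u v) = (f0gen F (i, u, v), f2gen F (i, u, v)) := by
    show (phi0 F (K2A.c F M59 i u v), phi2 F (K2A.c F M59 i u v)) = _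
    rw [phi0_c, phi2_c]
  rw [hphi]
  fin_cases i
  · show psi F (qsym F u v, 1) = K2A.c F M59 0 u v
    rw [psi_apply, map_one, mul_one, psiQ0_q]
  · show psi F (1, 1) = K2A.c F M59 1 u v
    rw [psi_apply, map_one, map_one, mul_one, k1_triv]
  · show psi F (1, qsym F u v) = K2A.c F M59 2 u v
    rw [psi_apply, map_one, one_mul, psiQ2_q]

lemma phi_comp_psi : (phi F).comp (psi F) = MonoidHom.id (QGrp F × QGrp F) := by
  have H0 : ((phi F).comp (psi F)).comp (MonoidHom.inl (QGrp F) (QGrp F)) =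
      (MonoidHom.id (QGrp F × QGrp F)).comp (MonoidHom.inl (QGrp F) (QGrp F)) := by
    refine QuotientGroup.monoidHom_ext _
      (Abelianization.hom_ext _ _ (PresentedGroup.ext fun x => ?_))
    obtain ⟨u, v⟩ := x
    show phi F (psi F (qsym F u v, 1)) = (qsym F u v, 1)
    rw [psi_apply, map_one, mul_one, psiQ0_q]
    show (phi0 F (K2A.c F M59 0 u v), phi2 F (K2A.c F M59 0 u v)) = _
    rw [phi0_c, phi2_c]
    rfl
  have H2 : ((phi F).comp (psi F)).comp (MonoidHom.inr (QGrp F) (QGrp F)) =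
      (MonoidHom.id (QGrp F × QGrp F)).comp (MonoidHom.inr (QGrp F) (QGrp F)) := by
    refine QuotientGroup.monoidHom_ext _
      (Abelianization.hom_ext _ _ (PresentedGroup.ext fun x => ?_))
    obtain ⟨u, v⟩ := x
    show phi F (psi F (1, qsym F u v)) = (1, qsym F u v)
    rw [psi_apply, map_one, one_mul, psiQ2_q]
    show (phi0 F (K2A.c F M59 2 u v), phi2 F (K2A.c F M59 2 u v)) = _
    rw [phi0_c, phi2_c]
    rfl
  refine prodHomExt (fun m => ?_) (fun n => ?_)
  · exact DFunLike.congr_fun H0 m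
  · exact DFunLike.congr_fun H2 n

/-- For the GCM with rows `(2,-1,-2)`, `(-2,2,-2)`, `(-2,-2,2)` (No. 59),
`K₂(A,F) ≅ (K₂(2,F)/⟨{u²,v}⟩) × (K₂(2,F)/⟨{u²,v}⟩)`. -/
theorem K2A_rank3_no59 (F : Type) [Field F] :
    Nonempty (K2A F !![2, -1, -2; -2, 2, -2; -2, -2, 2] ≃*
      ((K2SL F ⧸ K2SL.sqSubgroup F 1) × (K2SL F ⧸ K2SL.sqSubgroup F 1))) := by
  exact ⟨MonoidHom.toMulEquiv (phi F) (psi F) (psi_comp_phi F) (phi_comp_psi F)⟩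
end
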